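/- arXiv:2511.16866 — 7 statements merged into one kernel-verified Lean document; each statement's English description precedes it below -/
import Mathlib

section
/- In the free Lie ring on generators x_i, x_j, x_l, x_p (indices distinct), the identity [x_l,x_j,x_p,x_i] + [x_p,x_i,x_l,x_j] - [x_p,x_i,x_j,x_l] - [x_l,x_i,x_j,x_p] + [x_j,x_i,x_l,x_p] = 0 holds, where brackets are left-normed. -/
private lemma sk' {L : Type*} [LieRing L] (u v : L) : ⁅v,u⁆ = -⁅u,v⁆ :=
  (lie_skew u v).symm ▸ (neg_neg _).symm

private lemma lie_b4 {L : Type*} [LieRing L] (a b c d : L) :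
    ⁅⁅⁅c, b⁆, d⁆, a⁆ + ⁅⁅⁅d, a⁆, c⁆, b⁆ - ⁅⁅⁅d, a⁆, b⁆, c⁆ - ⁅⁅⁅c, a⁆, b⁆, d⁆
      + ⁅⁅⁅b, a⁆, c⁆, d⁆ = 0 := by
  simp only [lie_lie, add_lie, lie_add, sub_lie, lie_sub, smul_lie, lie_smul, neg_lie, lie_neg]
  simp only [sk' a b, sk' a c, sk' a d, sk' b c, sk' b d, sk' c d, lie_neg, neg_lie, neg_neg]
  simp only [leibniz_lie c b ⁅a,d⁆, leibniz_lie d b ⁅a,c⁆, leibniz_lie d c ⁅a,b⁆,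
    leibniz_lie d a ⁅b,c⁆, leibniz_lie c a ⁅b,d⁆, leibniz_lie b a ⁅c,d⁆]
  simp only [sk' a b, sk' a c, sk' a d, sk' b c, sk' b d, sk' c d, lie_neg, neg_lie, neg_neg,
    sk' ⁅a,b⁆ ⁅c,d⁆, sk' ⁅a,c⁆ ⁅b,d⁆, sk' ⁅a,d⁆ ⁅b,c⁆]
  abel

/-- In the free Lie ring, for distinct generators `x_i, x_j, x_l, x_p`, the left-normed
identity
`[x_l,x_j,x_p,x_i] + [x_p,x_i,x_l,x_j] − [x_p,x_i,x_j,x_l] − [x_l,x_i,x_j,x_p] + [x_j,x_i,x_l,x_p] = 0`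
holds. -/
theorem free_lie_identity_b4 (n : ℕ) (i j l p : Fin n)
    (hij : i ≠ j) (hil : i ≠ l) (hip : i ≠ p) (hjl : j ≠ l) (hjp : j ≠ p) (hlp : l ≠ p) :
    let x : Fin n → FreeLieAlgebra ℤ (Fin n) := FreeLieAlgebra.of ℤ
    ⁅⁅⁅x l, x j⁆, x p⁆, x i⁆ + ⁅⁅⁅x p, x i⁆, x l⁆, x j⁆
      - ⁅⁅⁅x p, x i⁆, x j⁆, x l⁆ - ⁅⁅⁅x l, x i⁆, x j⁆, x p⁆
      + ⁅⁅⁅x j, x i⁆, x l⁆, x p⁆ = 0 := by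
  intro x
  exact lie_b4 (x i) (x j) (x l) (x p)
end

section
/- In the free Lie ring on five distinct generators x_i, x_j, x_l, x_p, x_q, the identity [x_i,x_j,x_l,x_p,x_q] − [x_i,x_j,x_l,x_q,x_p] − [x_p,x_q,x_l,x_i,x_j] + [x_p,x_q,x_l,x_j,x_i] − [x_i,x_j,x_p,x_q,x_l] + [x_i,x_j,x_q,x_p,x_l] = 0 holds, where brackets are left-normed. -/
theorem lie_aux {L : Type*} [LieRing L] (a b c d e : L) :
    ⁅⁅⁅⁅a, b⁆, c⁆, d⁆, e⁆ - ⁅⁅⁅⁅a, b⁆, c⁆, e⁆, d⁆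
      - ⁅⁅⁅⁅d, e⁆, c⁆, a⁆, b⁆ + ⁅⁅⁅⁅d, e⁆, c⁆, b⁆, a⁆
      - ⁅⁅⁅⁅a, b⁆, d⁆, e⁆, c⁆ + ⁅⁅⁅⁅a, b⁆, e⁆, d⁆, c⁆ = 0 := by
  have h : ∀ x y z : L, ⁅⁅x, y⁆, z⁆ - ⁅⁅x, z⁆, y⁆ = ⁅x, ⁅y, z⁆⁆ := by
    intro x y z
    rw [leibniz_lie x y z, ← lie_skew ⁅x, z⁆ y]
    abel
  have e1 := h ⁅⁅a, b⁆, c⁆ d e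
  have e2 := h ⁅⁅d, e⁆, c⁆ a b
  have e3 : ⁅⁅⁅⁅a, b⁆, d⁆, e⁆, c⁆ - ⁅⁅⁅⁅a, b⁆, e⁆, d⁆, c⁆ = ⁅⁅⁅a, b⁆, ⁅d, e⁆⁆, c⁆ := by
    rw [← sub_lie, h]
  have e4 := h ⁅a, b⁆ c ⁅d, e⁆
  have e5 : ⁅⁅⁅d, e⁆, c⁆, ⁅a, b⁆⁆ = ⁅⁅a, b⁆, ⁅c, ⁅d, e⁆⁆⁆ := by
    rw [← lie_skew c ⁅d, e⁆, lie_neg, ← lie_skew]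
  linear_combination (norm := abel) e1 - e2 - e3 + e4 - e5

/-- In the free Lie ring, for five distinct generators `x_i, x_j, x_l, x_p, x_q`, the
left-normed identity
`[x_i,x_j,x_l,x_p,x_q] − [x_i,x_j,x_l,x_q,x_p] − [x_p,x_q,x_l,x_i,x_j] + [x_p,x_q,x_l,x_j,x_i]`
`− [x_i,x_j,x_p,x_q,x_l] + [x_i,x_j,x_q,x_p,x_l] = 0` holds. -/
theorem free_lie_identity_b5 (n : ℕ) (i j l p q : Fin n)
    (hij : i ≠ j) (hil : i ≠ l) (hip : i ≠ p) (hiq : i ≠ q)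
    (hjl : j ≠ l) (hjp : j ≠ p) (hjq : j ≠ q)
    (hlp : l ≠ p) (hlq : l ≠ q) (hpq : p ≠ q) :
    let x : Fin n → FreeLieAlgebra ℤ (Fin n) := FreeLieAlgebra.of ℤ
    ⁅⁅⁅⁅x i, x j⁆, x l⁆, x p⁆, x q⁆ - ⁅⁅⁅⁅x i, x j⁆, x l⁆, x q⁆, x p⁆
      - ⁅⁅⁅⁅x p, x q⁆, x l⁆, x i⁆, x j⁆ + ⁅⁅⁅⁅x p, x q⁆, x l⁆, x j⁆, x i⁆
      - ⁅⁅⁅⁅x i, x j⁆, x p⁆, x q⁆, x l⁆ + ⁅⁅⁅⁅x i, x j⁆, x q⁆, x p⁆, x l⁆ = 0 := by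
  intro x
  exact lie_aux (x i) (x j) (x l) (x p) (x q)
end

section
/- Let Der(L_n) be the derivation Lie algebra of the free Lie algebra L_n on H = Z^n, with degree-k part identified with Hom(H, L_n(k+1)). Define the tangential part p_n(k) as the Z-span of the derivations x_i^* ⊗ [x_{j_1},…,x_{j_k},x_i]. Then p_n = ⊕_{k≥1} p_n(k) is closed under the Lie bracket of derivations, i.e., p_n is a Lie subalgebra of Der^+(L_n). -/
/-- The degree-`k` homogeneous part of the free Lie ring on `n` generators. -/
noncomputable def Ln (n : ℕ) : ℕ → Submodule ℤ (FreeLieAlgebra ℤ (Fin n))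
  | 0 => ⊥
  | 1 => Submodule.span ℤ (Set.range (FreeLieAlgebra.of ℤ))
  | (k+2) => Submodule.span ℤ
      {y | ∃ a ∈ Ln n (k+1), ∃ i : Fin n, y = ⁅a, FreeLieAlgebra.of ℤ i⁆}

/-- A derivation of the free Lie ring is *tangential of degree `k`* when it sends each
generator `x_i` into the span of the brackets `[c, x_i]` with `c ∈ L_n(k)`; these are
exactly the elements of `p_n(k)` under `Der(L_n)(k) ≅ H^* ⊗ L_n(k+1)`. -/
def IsTangential (n k : ℕ)
    (D : LieDerivation ℤ (FreeLieAlgebra ℤ (Fin n)) (FreeLieAlgebra ℤ (Fin n))) : Prop :=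
  ∀ i : Fin n, D (FreeLieAlgebra.of ℤ i) ∈
    Submodule.span ℤ {y | ∃ c ∈ Ln n k, y = ⁅c, FreeLieAlgebra.of ℤ i⁆}

namespace TangAux

variable {n : ℕ}

local notation "L" => FreeLieAlgebra ℤ (Fin n)

lemma bracket_gen {p : ℕ} {a : L} (ha : a ∈ Ln n p) (i : Fin n) :
    ⁅a, FreeLieAlgebra.of ℤ i⁆ ∈ Ln n (p + 1) := by
  match p with
  | 0 =>
    have : a = 0 := by simpa [Ln] using ha
    simp [this]
  | m + 1 =>
    exact Submodule.subset_span ⟨a, ha, i, rfl⟩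

lemma bracket_mem : ∀ (q p : ℕ) (a b : L), a ∈ Ln n p → b ∈ Ln n q →
    ⁅a, b⁆ ∈ Ln n (p + q) := by
  intro q
  induction q using Nat.strong_induction_on with
  | _ q ih =>
    intro p a b ha hb
    match q with
    | 0 =>
      have : b = 0 := by simpa [Ln] using hb
      simp [this]
    | 1 =>
      refine Submodule.span_induction (p := fun b _ => ⁅a, b⁆ ∈ Ln n (p + 1)) ?_ ?_ ?_ ?_ hb
      · rintro _ ⟨i, rfl⟩
        exact bracket_gen ha i
      · simp
      · intro y z _ _ hy hz
        rw [lie_add]; exact add_mem hy hz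
      · intro z y _ hy
        rw [lie_smul]; exact Submodule.smul_mem _ _ hy
    | m + 2 =>
      refine Submodule.span_induction
        (p := fun b _ => ⁅a, b⁆ ∈ Ln n (p + (m + 2))) ?_ ?_ ?_ ?_ hb
      · rintro _ ⟨c, hc, i, rfl⟩
        rw [leibniz_lie]
        refine add_mem ?_ ?_
        · have h1 : ⁅a, c⁆ ∈ Ln n (p + (m + 1)) :=
            ih (m + 1) (by omega) p a c ha hc
          have := bracket_gen h1 i
          rwa [show p + (m + 1) + 1 = p + (m + 2) by omega] at this
        · have h1 : ⁅a, FreeLieAlgebra.of ℤ i⁆ ∈ Ln n (p + 1) := bracket_gen ha i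
          have h2 := ih (m + 1) (by omega) (p + 1) _ c h1 hc
          rw [show p + 1 + (m + 1) = p + (m + 2) by omega] at h2
          rw [← lie_skew]
          exact neg_mem h2
      · simp
      · intro y z _ _ hy hz
        rw [lie_add]; exact add_mem hy hz
      · intro z y _ hy
        rw [lie_smul]; exact Submodule.smul_mem _ _ hy

lemma deriv_of_mem {k : ℕ} {D : LieDerivation ℤ L L} (hD : IsTangential n k D)
    (i : Fin n) : D (FreeLieAlgebra.of ℤ i) ∈ Ln n (1 + k) := by
  refine Submodule.span_le.mpr ?_ (hD i)
  rintro _ ⟨c, hc, rfl⟩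
  have := bracket_gen hc i
  rwa [show k + 1 = 1 + k by omega] at this

lemma deriv_mem {k : ℕ} {D : LieDerivation ℤ L L} (hD : IsTangential n k D) :
    ∀ (m : ℕ) (a : L), a ∈ Ln n m → D a ∈ Ln n (m + k) := by
  intro m
  induction m using Nat.strong_induction_on with
  | _ m ih =>
    intro a ha
    match m with
    | 0 =>
      have : a = 0 := by simpa [Ln] using ha
      simp [this]
    | 1 =>
      refine Submodule.span_induction (p := fun a _ => D a ∈ Ln n (1 + k)) ?_ ?_ ?_ ?_ ha
      · rintro _ ⟨i, rfl⟩
        exact deriv_of_mem hD i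
      · simp
      · intro y z _ _ hy hz
        rw [map_add]; exact add_mem hy hz
      · intro z y _ hy
        rw [map_smul]; exact Submodule.smul_mem _ _ hy
    | m + 2 =>
      refine Submodule.span_induction
        (p := fun a _ => D a ∈ Ln n (m + 2 + k)) ?_ ?_ ?_ ?_ ha
      · rintro _ ⟨c, hc, i, rfl⟩
        rw [LieDerivation.apply_lie_eq_add]
        refine add_mem ?_ ?_
        · have h1 := deriv_of_mem hD i
          have := bracket_mem (1 + k) (m + 1) c _ hc h1
          rwa [show m + 1 + (1 + k) = m + 2 + k by omega] at this
        · have h1 : D c ∈ Ln n (m + 1 + k) := ih (m + 1) (by omega) c hc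
          have := bracket_gen h1 i
          rwa [show m + 1 + k + 1 = m + 2 + k by omega] at this
      · simp
      · intro y z _ _ hy hz
        rw [map_add]; exact add_mem hy hz
      · intro z y _ hy
        rw [map_smul]; exact Submodule.smul_mem _ _ hy

end TangAux

/-- `p_n = ⊕ₖ p_n(k)` is a Lie subalgebra of `Der⁺(L_n)`: the bracket of tangential
derivations of degrees `k` and `l` is tangential of degree `k + l`. -/
theorem tangential_closed_under_bracket (n k l : ℕ) (hk : 1 ≤ k) (hl : 1 ≤ l)
    (D₁ D₂ : LieDerivation ℤ (FreeLieAlgebra ℤ (Fin n)) (FreeLieAlgebra ℤ (Fin n)))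
    (h₁ : IsTangential n k D₁) (h₂ : IsTangential n l D₂) :
    IsTangential n (k + l) ⁅D₁, D₂⁆ := by
  intro i
  set L := FreeLieAlgebra ℤ (Fin n)
  set x : L := FreeLieAlgebra.of ℤ i with hx
  set T : Submodule ℤ L := Submodule.span ℤ {y | ∃ c ∈ Ln n (k + l), y = ⁅c, x⁆} with hT
  rw [LieDerivation.lie_apply]
  -- pair submodules remembering the coefficient
  let M : ℕ → Submodule ℤ (L × L) := fun q =>
    Submodule.span ℤ {p : L × L | ∃ c ∈ Ln n q, p = (⁅c, x⁆, c)}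
  -- the first components span exactly the tangential target sets
  have hset : ∀ q : ℕ, {y : L | ∃ c ∈ Ln n q, y = ⁅c, x⁆}
      = (LinearMap.fst ℤ L L) '' {p : L × L | ∃ c ∈ Ln n q, p = (⁅c, x⁆, c)} := by
    intro q
    ext y
    constructor
    · rintro ⟨c, hc, rfl⟩
      exact ⟨(⁅c, x⁆, c), ⟨c, hc, rfl⟩, rfl⟩
    · rintro ⟨p, ⟨c, hc, rfl⟩, rfl⟩
      exact ⟨c, hc, rfl⟩
  have hmem : ∀ q : ℕ, ∀ u : L, u ∈ Submodule.span ℤ {y : L | ∃ c ∈ Ln n q, y = ⁅c, x⁆} →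
      ∃ γ : L, (u, γ) ∈ M q := by
    intro q u hu
    rw [hset q, ← Submodule.map_span] at hu
    obtain ⟨p, hp, hp1⟩ := hu
    exact ⟨p.2, by simpa [← hp1] using hp⟩
  obtain ⟨γ, hγ⟩ := hmem l (D₂ x) (h₂ i)
  obtain ⟨β, hβ⟩ := hmem k (D₁ x) (h₁ i)
  -- degree bookkeeping for second components
  have hsnd : ∀ q : ℕ, ∀ p : L × L, p ∈ M q → p.2 ∈ Ln n q := by
    intro q p hp
    have hle : Submodule.map (LinearMap.snd ℤ L L) (M q) ≤ Ln n q := by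
      rw [Submodule.map_span]
      refine Submodule.span_le.mpr ?_
      rintro _ ⟨_, ⟨c, hc, rfl⟩, rfl⟩
      exact hc
    exact hle (Submodule.mem_map_of_mem hp)
  -- generator membership in T
  have genT : ∀ c : L, c ∈ Ln n (k + l) → ⁅c, x⁆ ∈ T :=
    fun c hc => Submodule.subset_span ⟨c, hc, rfl⟩
  -- Claim 1 : D₁ u - ⁅γ', D₁ x⁆ ∈ T for (u, γ') ∈ M l
  have C1 : ∀ p : L × L, p ∈ M l → D₁ p.1 - ⁅p.2, D₁ x⁆ ∈ T := by
    intro p hp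
    refine Submodule.span_induction
      (p := fun p _ => D₁ p.1 - ⁅p.2, D₁ x⁆ ∈ T) ?_ ?_ ?_ ?_ hp
    · rintro _ ⟨c, hc, rfl⟩
      show D₁ ⁅c, x⁆ - ⁅c, D₁ x⁆ ∈ T
      rw [LieDerivation.apply_lie_eq_add, add_sub_cancel_left]
      refine genT _ ?_
      have := TangAux.deriv_mem h₁ l c hc
      rwa [show l + k = k + l by omega] at this
    · simp
    · intro y z _ _ hy hz
      have : D₁ (y + z).1 - ⁅(y + z).2, D₁ x⁆
          = (D₁ y.1 - ⁅y.2, D₁ x⁆) + (D₁ z.1 - ⁅z.2, D₁ x⁆) := by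
        simp [Prod.fst_add, Prod.snd_add, map_add, add_lie]; abel
      rw [this]; exact add_mem hy hz
    · intro z y _ hy
      have : D₁ (z • y).1 - ⁅(z • y).2, D₁ x⁆ = z • (D₁ y.1 - ⁅y.2, D₁ x⁆) := by
        simp [Prod.smul_fst, Prod.smul_snd, map_smul, smul_lie, smul_sub]
      rw [this]; exact Submodule.smul_mem _ _ hy
  -- Claim 2 : D₂ v - ⁅β', D₂ x⁆ ∈ T for (v, β') ∈ M k
  have C2 : ∀ p : L × L, p ∈ M k → D₂ p.1 - ⁅p.2, D₂ x⁆ ∈ T := by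
    intro p hp
    refine Submodule.span_induction
      (p := fun p _ => D₂ p.1 - ⁅p.2, D₂ x⁆ ∈ T) ?_ ?_ ?_ ?_ hp
    · rintro _ ⟨c, hc, rfl⟩
      show D₂ ⁅c, x⁆ - ⁅c, D₂ x⁆ ∈ T
      rw [LieDerivation.apply_lie_eq_add, add_sub_cancel_left]
      exact genT _ (TangAux.deriv_mem h₂ k c hc)
    · simp
    · intro y z _ _ hy hz
      have : D₂ (y + z).1 - ⁅(y + z).2, D₂ x⁆
          = (D₂ y.1 - ⁅y.2, D₂ x⁆) + (D₂ z.1 - ⁅z.2, D₂ x⁆) := by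
        simp [Prod.fst_add, Prod.snd_add, map_add, add_lie]; abel
      rw [this]; exact add_mem hy hz
    · intro z y _ hy
      have : D₂ (z • y).1 - ⁅(z • y).2, D₂ x⁆ = z • (D₂ y.1 - ⁅y.2, D₂ x⁆) := by
        simp [Prod.smul_fst, Prod.smul_snd, map_smul, smul_lie, smul_sub]
      rw [this]; exact Submodule.smul_mem _ _ hy
  -- Claim 3 : cross terms; uses (D₂ x, γ) ∈ M l
  have C3 : ∀ q : L × L, q ∈ M k → ⁅γ, q.1⁆ - ⁅q.2, D₂ x⁆ ∈ T := by
    intro q hq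
    refine Submodule.span_induction
      (p := fun q _ => ⁅γ, q.1⁆ - ⁅q.2, D₂ x⁆ ∈ T) ?_ ?_ ?_ ?_ hq
    · rintro _ ⟨b, hb, rfl⟩
      -- inner induction over (D₂ x, γ) ∈ M l
      refine Submodule.span_induction
        (p := fun p _ => ⁅p.2, ⁅b, x⁆⁆ - ⁅b, p.1⁆ ∈ T) ?_ ?_ ?_ ?_ hγ
      · rintro _ ⟨c, hc, rfl⟩
        show ⁅c, ⁅b, x⁆⁆ - ⁅b, ⁅c, x⁆⁆ ∈ T
        have heq : ⁅c, ⁅b, x⁆⁆ - ⁅b, ⁅c, x⁆⁆ = ⁅⁅c, b⁆, x⁆ := by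
          rw [leibniz_lie]; abel
        rw [heq]
        refine genT _ ?_
        have := TangAux.bracket_mem k l c b hc hb
        rwa [show l + k = k + l by omega] at this
      · simp
      · intro y z _ _ hy hz
        have : ⁅(y + z).2, ⁅b, x⁆⁆ - ⁅b, (y + z).1⁆
            = (⁅y.2, ⁅b, x⁆⁆ - ⁅b, y.1⁆) + (⁅z.2, ⁅b, x⁆⁆ - ⁅b, z.1⁆) := by
          simp [Prod.fst_add, Prod.snd_add, add_lie, lie_add]; abel
        rw [this]; exact add_mem hy hz
      · intro z y _ hy
        have : ⁅(z • y).2, ⁅b, x⁆⁆ - ⁅b, (z • y).1⁆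
            = z • (⁅y.2, ⁅b, x⁆⁆ - ⁅b, y.1⁆) := by
          simp [Prod.smul_fst, Prod.smul_snd, smul_lie, lie_smul, smul_sub]
        rw [this]; exact Submodule.smul_mem _ _ hy
    · simp
    · intro y z _ _ hy hz
      have : ⁅γ, (y + z).1⁆ - ⁅(y + z).2, D₂ x⁆
          = (⁅γ, y.1⁆ - ⁅y.2, D₂ x⁆) + (⁅γ, z.1⁆ - ⁅z.2, D₂ x⁆) := by
        simp [Prod.fst_add, Prod.snd_add, add_lie, lie_add]; abel
      rw [this]; exact add_mem hy hz
    · intro z y _ hy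
      have : ⁅γ, (z • y).1⁆ - ⁅(z • y).2, D₂ x⁆ = z • (⁅γ, y.1⁆ - ⁅y.2, D₂ x⁆) := by
        simp [Prod.smul_fst, Prod.smul_snd, smul_lie, lie_smul, smul_sub]
      rw [this]; exact Submodule.smul_mem _ _ hy
  have e1 := C1 _ hγ
  have e2 := C2 _ hβ
  have e3 := C3 _ hβ
  have : D₁ (D₂ x) - D₂ (D₁ x)
      = (D₁ (D₂ x) - ⁅γ, D₁ x⁆) - (D₂ (D₁ x) - ⁅β, D₂ x⁆) + (⁅γ, D₁ x⁆ - ⁅β, D₂ x⁆) := by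
    abel
  rw [this]
  exact add_mem (sub_mem e1 e2) e3
end

section
/- For any braid σ in B_n ⊆ Aut(F_n) lying in the k-th term B_n(k) of the Andreadakis–Johnson filtration (k ≥ 2), writing x_i^σ = x_i C_i with C_i ∈ Γ_n(k+1), one has C_1 C_2 ⋯ C_n ∈ Γ_n(k+2). Consequently the image of the k-th Johnson homomorphism τ_k^B lies in the special derivation module b_n(k). -/
/-! Modulo `Γ(k+2)` the elements `C_i ∈ Γ(k+1)` are central, so applying `σ` to
`x_1 ⋯ x_n` gives `x_1 C_1 ⋯ x_n C_n ≡ x_1 ⋯ x_n · C_1 ⋯ C_n`; since `σ` fixes the product,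
`C_1 ⋯ C_n ≡ 1`. -/

theorem List.prod_map_mul_of_commute {ι M : Type*} [Monoid M] (l : List ι) (f g : ι → M)
    (hg : ∀ i ∈ l, ∀ y, Commute (g i) y) :
    (l.map fun i => f i * g i).prod = (l.map f).prod * (l.map g).prod := by
  induction l with
  | nil => simp
  | cons a l ih =>
    simp only [List.map_cons, List.prod_cons]
    rw [ih fun i hi => hg i (List.mem_cons_of_mem a hi), mul_assoc,
      (hg a List.mem_cons_self _).left_comm, mul_assoc]

open scoped commutatorElement in
theorem Subgroup.commute_mk_of_mem_lowerCentralSeries {G : Type*} [Group G] {k : ℕ} {g : G}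
    (hg : g ∈ (⊤ : Subgroup G).lowerCentralSeries k)
    (y : G ⧸ (⊤ : Subgroup G).lowerCentralSeries (k + 1)) : Commute (g : G ⧸ _) y := by
  induction y using QuotientGroup.induction_on with
  | H z =>
    have hgz : ⁅g, z⁆ ∈ (⊤ : Subgroup G).lowerCentralSeries (k + 1) :=
      Subgroup.commutator_mem_commutator hg (Subgroup.mem_top z)
    rw [← QuotientGroup.eq_one_iff, ← QuotientGroup.mk'_apply, map_commutatorElement] at hgz
    exact commutatorElement_eq_one_iff_commute.mp hgz

theorem Subgroup.prod_ofFn_mem_lowerCentralSeries_succ {G : Type*} [Group G] {n k : ℕ}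
    (x C : Fin n → G) (hC : ∀ i, C i ∈ (⊤ : Subgroup G).lowerCentralSeries k)
    (h : (List.ofFn fun i => x i * C i).prod = (List.ofFn x).prod) :
    (List.ofFn C).prod ∈ (⊤ : Subgroup G).lowerCentralSeries (k + 1) := by
  set π := QuotientGroup.mk' ((⊤ : Subgroup G).lowerCentralSeries (k + 1))
  have hsplit :
      π (List.ofFn fun i => x i * C i).prod = π (List.ofFn x).prod * π (List.ofFn C).prod := by
    simpa only [map_list_prod, List.map_ofFn, Function.comp_def, map_mul, List.ofFn_eq_map,
      List.map_map] using List.prod_map_mul_of_commute (List.finRange n) (fun i => π (x i))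
        (fun i => π (C i)) fun i _ => commute_mk_of_mem_lowerCentralSeries (hC i)
  rw [h] at hsplit
  rw [← QuotientGroup.eq_one_iff, ← QuotientGroup.mk'_apply]
  exact mul_eq_left.mp hsplit.symm

theorem johnson_image_special_general (n k : ℕ)
    (σ : FreeGroup (Fin n) ≃* FreeGroup (Fin n))
    (hC : ∀ i : Fin n,
      (FreeGroup.of i)⁻¹ * σ (FreeGroup.of i) ∈ (⊤ : Subgroup (FreeGroup (Fin n))).lowerCentralSeries k)
    (hfix : σ ((List.ofFn fun i : Fin n => FreeGroup.of i).prod) =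
      (List.ofFn fun i : Fin n => FreeGroup.of i).prod) :
    (List.ofFn fun i : Fin n => (FreeGroup.of i)⁻¹ * σ (FreeGroup.of i)).prod ∈
      (⊤ : Subgroup (FreeGroup (Fin n))).lowerCentralSeries (k + 1) := by
  refine Subgroup.prod_ofFn_mem_lowerCentralSeries_succ FreeGroup.of _ hC ?_
  simpa only [mul_inv_cancel_left, map_list_prod, List.map_ofFn, Function.comp_def] using hfix

/-- Let `σ` be a braid automorphism of the free group `F_n` (each generator is sent to a
conjugate of itself and the product `x_1 ⋯ x_n` is fixed) lying in the `k`-th term of the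
Andreadakis–Johnson filtration, i.e. `C_i := x_i⁻¹ · σ(x_i) ∈ Γ_n(k+1)` for all `i`
(`Γ_n(m)` is `lowerCentralSeries _ (m-1)` in Mathlib's indexing).  Then
`C_1 C_2 ⋯ C_n ∈ Γ_n(k+2)`; consequently the image of the `k`-th Johnson homomorphism of
the braid group lies in the special derivation module `b_n(k)`. -/
theorem johnson_image_special (n k : ℕ) (hk : 2 ≤ k)
    (σ : FreeGroup (Fin n) ≃* FreeGroup (Fin n))
    (hconj : ∀ i : Fin n, ∃ c : FreeGroup (Fin n),
      σ (FreeGroup.of i) = c * FreeGroup.of i * c⁻¹)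
    (hC : ∀ i : Fin n,
      (FreeGroup.of i)⁻¹ * σ (FreeGroup.of i) ∈ (⊤ : Subgroup (FreeGroup (Fin n))).lowerCentralSeries k)
    (hfix : σ ((List.ofFn fun i : Fin n => FreeGroup.of i).prod) =
      (List.ofFn fun i : Fin n => FreeGroup.of i).prod) :
    (List.ofFn fun i : Fin n => (FreeGroup.of i)⁻¹ * σ (FreeGroup.of i)).prod ∈
      (⊤ : Subgroup (FreeGroup (Fin n))).lowerCentralSeries (k + 1) :=
  johnson_image_special_general n k σ hC hfix
end

section
/- The degree-1 special derivation module b_n(1), consisting of elements of p_n(1) of the form Σ_i x_i^* ⊗ C_i with Σ_i C_i = 0 in L_n(2), is a free abelian group of rank n(n−1)/2, with basis { x_i^* ⊗ [x_j,x_i] + x_j^* ⊗ [x_i,x_j] : 1 ≤ i < j ≤ n }. -/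
open scoped TensorProduct

/-- The tangential derivation module `p_n(k)`, in the representation
`H^* ⊗ L_n(k+1) ≅ (Fin n → L_n)` (the `i`-th component records `C_i` in
`Σᵢ x_i^* ⊗ C_i`), spanned by the elements `x_i^* ⊗ [c, x_i]` with `c ∈ L_n(k)`. -/
noncomputable def pnM (n k : ℕ) : Submodule ℤ (Fin n → FreeLieAlgebra ℤ (Fin n)) :=
  Submodule.span ℤ
    {f | ∃ i : Fin n, ∃ c ∈ Ln n k, f = Pi.single i ⁅c, FreeLieAlgebra.of ℤ i⁆}

/-- Summation map sending `Σᵢ x_i^* ⊗ C_i` to `Σᵢ C_i`. -/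
noncomputable def sumMap (n : ℕ) :
    (Fin n → FreeLieAlgebra ℤ (Fin n)) →ₗ[ℤ] FreeLieAlgebra ℤ (Fin n) :=
  LinearMap.lsum ℤ (fun _ : Fin n => FreeLieAlgebra ℤ (Fin n)) ℤ (fun _ => LinearMap.id)

/-- The special derivation module `b_n(k)`. -/
noncomputable def bnM (n k : ℕ) : Submodule ℤ (Fin n → FreeLieAlgebra ℤ (Fin n)) :=
  pnM n k ⊓ LinearMap.ker (sumMap n)

/-! Write `g(i,j) = x_i^* ⊗ [x_j,x_i]`; these span `p_n(1)`, and `g(i,i) = 0`. Map the free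
Lie ring to the free associative ring: the coefficient of the word `x_j x_i` in
`Σ c_{ij} [x_j,x_i]` is `c_{ij} - c_{ji}`, so `Σ c_{ij} g(i,j)` lies in `b_n(1)` exactly when `c`
is symmetric, i.e. when it is `Σ_{i<j} c_{ij} (g(i,j) + g(j,i))`. These elements are independent,
since the coefficient of `x_j x_i` in the `i`-th component sees only `g(i,j)`. -/

lemma FreeMonoid.of_mul_of_eq_iff {X : Type*} {a b c d : X} :
    of a * of b = of c * of d ↔ (a, b) = (c, d) := by
  rw [← toList.injective.eq_iff]
  simp

lemma FreeAlgebra.basisFreeMonoid_of_mul_of {R X : Type*} [CommSemiring R] (a b : X) :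
    basisFreeMonoid R X (FreeMonoid.of a * FreeMonoid.of b) = ι R a * ι R b := by
  apply equivMonoidAlgebraFreeMonoid.injective
  simp [basisFreeMonoid, equivMonoidAlgebraFreeMonoid]

theorem Fintype.sum_prod_eq_sum_lt_add_swap {ι M : Type*} [Fintype ι] [LinearOrder ι]
    [AddCommMonoid M] (F : ι × ι → M) (hF : ∀ i, F (i, i) = 0) :
    ∑ q, F q = ∑ p : {p : ι × ι // p.1 < p.2}, (F p.1 + F p.1.swap) := by
  have hsplit (q : ι × ι) :
      F q = (if q.1 < q.2 then F q else 0) + (if q.2 < q.1 then F q else 0) := by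
    obtain ⟨a, b⟩ := q
    rcases lt_trichotomy a b with h | rfl | h
    · simp [h, h.not_gt]
    · simp [hF]
    · simp [h, h.not_gt]
  have hswap : ∑ q : ι × ι, (if q.2 < q.1 then F q else 0) =
      ∑ q : ι × ι, (if q.1 < q.2 then F q.swap else 0) :=
    Fintype.sum_equiv (Equiv.prodComm ι ι) _ _ fun _ => rfl
  rw [Fintype.sum_congr _ _ hsplit, Finset.sum_add_distrib, hswap, ← Finset.sum_add_distrib]
  simp only [← ite_add_zero]
  rw [← Finset.sum_filter]
  exact Finset.sum_subtype _ (by simp) _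

namespace FreeLieAlgebra

variable {R X : Type*} [CommRing R]

attribute [local instance 100] LieRing.ofAssociativeRing

noncomputable def toFreeAlgebra : FreeLieAlgebra R X →ₗ⁅R⁆ FreeAlgebra R X :=
  lift R (FreeAlgebra.ι R)

lemma toFreeAlgebra_lie_of_of (a b : X) :
    toFreeAlgebra ⁅of R a, of R b⁆ =
      FreeAlgebra.ι R a * FreeAlgebra.ι R b - FreeAlgebra.ι R b * FreeAlgebra.ι R a := by
  rw [LieHom.map_lie, toFreeAlgebra, lift_of_apply, lift_of_apply, Ring.lie_def]

noncomputable def wordCoeff (w : FreeMonoid X) : FreeLieAlgebra R X →ₗ[R] R :=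
  (FreeAlgebra.basisFreeMonoid R X).coord w ∘ₗ toFreeAlgebra.toLinearMap

lemma wordCoeff_lie_of_of [DecidableEq X] (a b c d : X) :
    wordCoeff (FreeMonoid.of c * FreeMonoid.of d) ⁅of R a, of R b⁆ =
      (if (a, b) = (c, d) then 1 else 0) - (if (b, a) = (c, d) then 1 else 0) := by
  rw [wordCoeff, LinearMap.comp_apply, LieHom.coe_toLinearMap, toFreeAlgebra_lie_of_of,
    ← FreeAlgebra.basisFreeMonoid_of_mul_of, ← FreeAlgebra.basisFreeMonoid_of_mul_of, map_sub,
    Module.Basis.coord_apply, Module.Basis.coord_apply, Module.Basis.repr_self,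
    Module.Basis.repr_self]
  classical
  simp only [Finsupp.single_apply, FreeMonoid.of_mul_of_eq_iff]

end FreeLieAlgebra

section

open FreeLieAlgebra Submodule

variable {n : ℕ}

noncomputable def pnGen (q : Fin n × Fin n) : Fin n → FreeLieAlgebra ℤ (Fin n) :=
  Pi.single q.1 ⁅of ℤ q.2, of ℤ q.1⁆

noncomputable def bnGen (p : {p : Fin n × Fin n // p.1 < p.2}) :
    Fin n → FreeLieAlgebra ℤ (Fin n) :=
  pnGen p.1 + pnGen p.1.swap

lemma pnGen_self (i : Fin n) : pnGen (i, i) = 0 := by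
  simp [pnGen]

lemma sumMap_single (i : Fin n) (x : FreeLieAlgebra ℤ (Fin n)) :
    sumMap n (Pi.single i x) = x := by
  simp [sumMap]

lemma pnM_one_eq_span : pnM n 1 = span ℤ (Set.range (pnGen (n := n))) := by
  refine le_antisymm (span_le.mpr ?_) (span_le.mpr ?_)
  · rintro _ ⟨i, c, hc, rfl⟩
    change c ∈ span ℤ (Set.range (of ℤ)) at hc
    induction hc using span_induction with
    | mem _ h => obtain ⟨j, rfl⟩ := h; exact subset_span ⟨(i, j), rfl⟩
    | zero => simp
    | add a b _ _ ha hb => simpa [add_lie, Pi.single_add] using add_mem ha hb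
    | smul r a _ ha => simpa [smul_lie, Pi.single_smul] using smul_mem _ r ha
  · rintro _ ⟨q, rfl⟩
    exact subset_span ⟨q.1, of ℤ q.2, subset_span ⟨q.2, rfl⟩, rfl⟩

lemma bnGen_mem (p : {p : Fin n × Fin n // p.1 < p.2}) : bnGen p ∈ bnM n 1 := by
  refine mem_inf.mpr ⟨add_mem ?_ ?_, ?_⟩
  · exact pnM_one_eq_span ▸ subset_span ⟨_, rfl⟩
  · exact pnM_one_eq_span ▸ subset_span ⟨_, rfl⟩
  · rw [LinearMap.mem_ker, bnGen, map_add, pnGen, pnGen, sumMap_single, sumMap_single,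
      add_eq_zero_iff_eq_neg, Prod.fst_swap, Prod.snd_swap, lie_skew]

noncomputable def pnCoord (i j : Fin n) : (Fin n → FreeLieAlgebra ℤ (Fin n)) →ₗ[ℤ] ℤ :=
  wordCoeff (FreeMonoid.of j * FreeMonoid.of i) ∘ₗ LinearMap.proj i

-- `LinearMap.comp_apply` does not fire here: the two ℤ-module structures on the free Lie ring
-- (as a ring-linear Lie algebra and as an abelian group) agree only up to unfolding.
lemma pnCoord_apply (i j : Fin n) (f : Fin n → FreeLieAlgebra ℤ (Fin n)) :
    pnCoord i j f = wordCoeff (FreeMonoid.of j * FreeMonoid.of i) (f i) :=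
  rfl

lemma pnCoord_pnGen {i j : Fin n} (hij : i ≠ j) (q : Fin n × Fin n) :
    pnCoord i j (pnGen q) = if q = (i, j) then 1 else 0 := by
  obtain ⟨a, b⟩ := q
  by_cases ha : a = i
  · subst ha
    simp [pnCoord_apply, pnGen, wordCoeff_lie_of_of, hij]
  · simp [pnCoord_apply, pnGen, ha]

lemma pnCoord_bnGen (p q : {p : Fin n × Fin n // p.1 < p.2}) :
    pnCoord p.1.1 p.1.2 (bnGen q) = if q = p then 1 else 0 := by
  have hswap : q.1.swap ≠ p.1 := by
    obtain ⟨⟨a, b⟩, hab⟩ := q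
    obtain ⟨⟨c, d⟩, hcd⟩ := p
    rintro ⟨⟩
    exact lt_asymm hab hcd
  simp [bnGen, pnCoord_pnGen p.2.ne, hswap, Subtype.ext_iff]

lemma linearIndependent_bnGen : LinearIndependent ℤ (bnGen (n := n)) := by
  refine Fintype.linearIndependent_iff.mpr fun c hc p => ?_
  simpa [pnCoord_bnGen] using congrArg (pnCoord p.1.1 p.1.2) hc

lemma symm_of_sumMap_sum_pnGen_eq_zero {c : Fin n × Fin n → ℤ}
    (h : sumMap n (∑ q, c q • pnGen q) = 0) (i j : Fin n) : c (i, j) = c (j, i) := by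
  have hcoeff (q : Fin n × Fin n) :
      wordCoeff (FreeMonoid.of j * FreeMonoid.of i) (sumMap n (pnGen q)) =
        (if q = (i, j) then 1 else 0) - (if q = (j, i) then 1 else 0) := by
    obtain ⟨a, b⟩ := q
    simp [pnGen, sumMap_single, wordCoeff_lie_of_of, and_comm]
  simpa [map_sum, hcoeff, mul_sub, Finset.sum_sub_distrib, sub_eq_zero] using
    congrArg (wordCoeff (FreeMonoid.of j * FreeMonoid.of i)) h

lemma bnM_one_eq_span : bnM n 1 = span ℤ (Set.range (bnGen (n := n))) := by
  refine le_antisymm (fun x hx => ?_) (span_le.mpr ?_)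
  · obtain ⟨hxp, hxker⟩ := mem_inf.mp hx
    obtain ⟨c, rfl⟩ := (mem_span_range_iff_exists_fun ℤ).mp (pnM_one_eq_span ▸ hxp)
    have hc := symm_of_sumMap_sum_pnGen_eq_zero (LinearMap.mem_ker.mp hxker)
    rw [Fintype.sum_prod_eq_sum_lt_add_swap _ fun i => by simp [pnGen_self]]
    refine sum_mem fun p _ => ?_
    have hswap : c p.1.swap = c p.1 := hc _ _
    rw [hswap, ← smul_add]
    exact smul_mem _ _ (subset_span ⟨p, rfl⟩)
  · rintro _ ⟨p, rfl⟩
    exact bnGen_mem p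

end

/-- `b_n(1)` is a free abelian group of rank `n(n−1)/2`, with basis the elements
`x_i^* ⊗ [x_j,x_i] + x_j^* ⊗ [x_i,x_j]` for `i < j`. -/
theorem bn_one_basis (n : ℕ) :
    Module.finrank ℤ (bnM n 1) = n * (n - 1) / 2 ∧
    ∃ b : Module.Basis {p : Fin n × Fin n // p.1 < p.2} ℤ (bnM n 1),
      ∀ p : {p : Fin n × Fin n // p.1 < p.2},
        (b p : Fin n → FreeLieAlgebra ℤ (Fin n)) =
          Pi.single p.1.1 ⁅FreeLieAlgebra.of ℤ p.1.2, FreeLieAlgebra.of ℤ p.1.1⁆ +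
          Pi.single p.1.2 ⁅FreeLieAlgebra.of ℤ p.1.1, FreeLieAlgebra.of ℤ p.1.2⁆ := by
  let b := (Module.Basis.span linearIndependent_bnGen).map
    (LinearEquiv.ofEq _ _ (bnM_one_eq_span (n := n)).symm)
  refine ⟨?_, b, fun p => ?_⟩
  · rw [Module.finrank_eq_card_basis b, Fintype.card_subtype, Fintype.card_product_filter_lt,
      Fintype.card_fin, Nat.choose_two_right]
  · simp [b, Module.Basis.span_apply, bnGen, pnGen]
end

section
/- For n ≥ 3, the subgroup b_n(2,(1³)) of special derivations in degree 2 supported on the monomial set {permutations of (1,2,3)} is free abelian of rank 1, generated by x_1^* ⊗ [x_3,x_2,x_1] − x_2^* ⊗ [x_3,x_1,x_2] + x_3^* ⊗ [x_2,x_1,x_3]. -/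
/-!
By the Jacobi identity `[x₃,x₂,x₁] = [x₃,x₁,x₂] − [x₂,x₁,x₃]`, the combination
`a x₁^* ⊗ [x₃,x₂,x₁] + b x₂^* ⊗ [x₃,x₁,x₂] + c x₃^* ⊗ [x₂,x₁,x₃]` is sent by the summation map
to `(a + b) [x₃,x₁,x₂] + (c − a) [x₂,x₁,x₃]`. These two brackets are linearly independent in the
free Lie ring, as their images under a Lie ring map to `2 × 2` integer matrices show. Hence the
kernel consists of the combinations with `b = −a` and `c = a`, the multiples of the stated
generator, and that generator is not torsion because its first component `[x₃,x₂,x₁]` is not.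
-/

open scoped TensorProduct

open Submodule

section SumKernel

variable {R M ι : Type*} [CommRing R] [AddCommGroup M] [Module R M] [DecidableEq ι]

theorem finrank_span_singleton_eq_one [Nontrivial R] {v : M} (hv : ∀ r : R, r • v = 0 → r = 0) :
    Module.finrank R (span R {v}) = 1 := by
  have := finrank_span_eq_card (LinearIndependent.of_subsingleton' (v := fun _ : Unit => v) () hv)
  rwa [Set.range_const, Fintype.card_unit] at this

theorem finrank_span_single_sub_add_single [Nontrivial R] {A B C : M} (hABC : A = B - C)
    (hBC : LinearIndependent R ![B, C]) {i j k : ι} (hij : i ≠ j) (hik : i ≠ k) :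
    Module.finrank R (span R {(Pi.single i A - Pi.single j B + Pi.single k C : ι → M)}) = 1 := by
  refine finrank_span_singleton_eq_one fun r hr => ?_
  have hrA : r • B + (-r) • C = 0 := by
    simpa [hij.symm, hik.symm, hABC, smul_sub, sub_eq_add_neg] using congrFun hr i
  exact (LinearIndependent.pair_iff.mp hBC r (-r) hrA).1

theorem span_singles_inf_ker_lsum_id [Fintype ι] {A B C : M} (hABC : A = B - C)
    (hBC : LinearIndependent R ![B, C]) (i j k : ι) :
    span R {Pi.single i A, Pi.single j B, Pi.single k C} ⊓
        LinearMap.ker (LinearMap.lsum R (fun _ : ι => M) R (fun _ => LinearMap.id)) =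
      span R {Pi.single i A - Pi.single j B + Pi.single k C} := by
  apply le_antisymm
  · rintro v ⟨hv, hsum⟩
    obtain ⟨a, w, hw, rfl⟩ := mem_span_insert.mp hv
    obtain ⟨b, c, rfl⟩ := mem_span_pair.mp hw
    have hcoeff : (a + b) • B + (c - a) • C = 0 := by
      rw [← hsum]
      simp only [map_add, map_smul, LinearMap.lsum_piSingle, LinearMap.id_apply, hABC]
      module
    obtain ⟨hab, hca⟩ := LinearIndependent.pair_iff.mp hBC _ _ hcoeff
    refine mem_span_singleton.mpr ⟨a, ?_⟩
    rw [eq_neg_of_add_eq_zero_right hab, sub_eq_zero.mp hca]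
    module
  · rw [span_le, Set.singleton_subset_iff]
    refine ⟨add_mem (sub_mem (subset_span (by simp)) (subset_span (by simp)))
      (subset_span (by simp)), ?_⟩
    simp only [SetLike.mem_coe, LinearMap.mem_ker, map_add, map_sub, LinearMap.lsum_piSingle,
      LinearMap.id_apply, hABC]
    abel

end SumKernel

theorem lie_lie_eq_lie_lie_sub_lie_lie {L : Type*} [LieRing L] (x y z : L) :
    ⁅⁅z, y⁆, x⁆ = ⁅⁅z, x⁆, y⁆ - ⁅⁅y, x⁆, z⁆ := by
  rw [lie_lie, ← lie_skew y ⁅z, x⁆, ← lie_skew z ⁅y, x⁆]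
  abel

section FreeLieRing

open FreeLieAlgebra

attribute [local instance] LieRing.ofAssociativeRing

theorem linearIndependent_lie_lie_of_ne {X : Type*} {a b c : X} (hab : a ≠ b) (hac : a ≠ c)
    (hbc : b ≠ c) :
    LinearIndependent ℤ ![⁅⁅of ℤ c, of ℤ a⁆, of ℤ b⁆, ⁅⁅of ℤ b, of ℤ a⁆, of ℤ c⁆] := by
  classical
  let ρ : FreeLieAlgebra ℤ X →ₗ⁅ℤ⁆ Matrix (Fin 2) (Fin 2) ℤ := lift ℤ fun x =>
    if x = a then !![1, -1; 0, 1] else if x = b then !![-1, 1; 1, -1] else !![-1, 0; 1, 0]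
  have ρa : ρ (of ℤ a) = !![1, -1; 0, 1] := (lift_of_apply _ _).trans (by simp)
  have ρb : ρ (of ℤ b) = !![-1, 1; 1, -1] := (lift_of_apply _ _).trans (by simp [hab.symm])
  have ρc : ρ (of ℤ c) = !![-1, 0; 1, 0] :=
    (lift_of_apply _ _).trans (by simp [hac.symm, hbc.symm])
  have ρB : ρ ⁅⁅of ℤ c, of ℤ a⁆, of ℤ b⁆ = !![1, 2; -2, -1] := by
    rw [LieHom.map_lie, LieHom.map_lie, ρa, ρb, ρc]
    simp [Ring.lie_def]
  have ρC : ρ ⁅⁅of ℤ b, of ℤ a⁆, of ℤ c⁆ = !![0, 0; -2, 0] := by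
    rw [LieHom.map_lie, LieHom.map_lie, ρa, ρb, ρc]
    simp [Ring.lie_def]
  refine LinearIndependent.pair_iff.mpr fun s t hst => ?_
  have hρ := congrArg ρ hst
  rw [map_add, map_smul, map_smul, ρB, ρC, map_zero] at hρ
  have h00 : s = 0 := by simpa using congrFun₂ hρ 0 0
  have h10 : -(s * 2) + -(t * 2) = 0 := by simpa using congrFun₂ hρ 1 0
  omega

end FreeLieRing

/-- For `n ≥ 3`, the degree-2 special derivations supported on permutations of
`(1,2,3)` form a rank-one free abelian group generated by
`x₁^* ⊗ [x₃,x₂,x₁] − x₂^* ⊗ [x₃,x₁,x₂] + x₃^* ⊗ [x₂,x₁,x₃]`. -/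
theorem bn_two_cube (n : ℕ) (hn : 3 ≤ n) :
    let x : Fin n → FreeLieAlgebra ℤ (Fin n) := FreeLieAlgebra.of ℤ
    let i0 : Fin n := ⟨0, by omega⟩
    let i1 : Fin n := ⟨1, by omega⟩
    let i2 : Fin n := ⟨2, by omega⟩
    let pα : Submodule ℤ (Fin n → FreeLieAlgebra ℤ (Fin n)) :=
      Submodule.span ℤ
        {Pi.single i0 ⁅⁅x i2, x i1⁆, x i0⁆,
         Pi.single i1 ⁅⁅x i2, x i0⁆, x i1⁆,
         Pi.single i2 ⁅⁅x i1, x i0⁆, x i2⁆}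
    let g : Fin n → FreeLieAlgebra ℤ (Fin n) :=
      Pi.single i0 ⁅⁅x i2, x i1⁆, x i0⁆ - Pi.single i1 ⁅⁅x i2, x i0⁆, x i1⁆ +
        Pi.single i2 ⁅⁅x i1, x i0⁆, x i2⁆
    pα ⊓ LinearMap.ker (sumMap n) = Submodule.span ℤ {g} ∧
      Module.finrank ℤ ↥(pα ⊓ LinearMap.ker (sumMap n)) = 1 := by
  intro x i0 i1 i2 pα g
  have h01 : i0 ≠ i1 := by simp [i0, i1, Fin.ext_iff]
  have h02 : i0 ≠ i2 := by simp [i0, i2, Fin.ext_iff]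
  have h12 : i1 ≠ i2 := by simp [i1, i2, Fin.ext_iff]
  have hJacobi := lie_lie_eq_lie_lie_sub_lie_lie (x i0) (x i1) (x i2)
  have hindep := linearIndependent_lie_lie_of_ne h01 h02 h12
  have hker : pα ⊓ LinearMap.ker (sumMap n) = span ℤ {g} :=
    span_singles_inf_ker_lsum_id hJacobi hindep i0 i1 i2
  exact ⟨hker, hker ▸ finrank_span_single_sub_add_single hJacobi hindep h01 h02⟩
end

section
/- The contraction map Φ^k: H^* ⊗ L_n(k+1) → H^{⊗k}, given by embedding L_n(k+1) into H^{⊗(k+1)} and contracting the dual vector against the first tensor factor, satisfies Φ^k(x_i^* ⊗ [x_{i_1},…,x_{i_{k+1}}]) = δ_{i,i_1} x_{i_2}⊗⋯⊗x_{i_{k+1}} − Σ_{l=2}^{k+1} δ_{i,i_l} ι([x_{i_1},…,x_{i_{l-1}}]) ⊗ x_{i_{l+1}}⊗⋯⊗x_{i_{k+1}}, where ι is the embedding of the free Lie ring into the tensor algebra. -/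
open FreeLieAlgebra

/-- Left-normed bracket `[x, xs₁, xs₂, …]`. -/
noncomputable def lnb {n : ℕ} (x : Fin n) (xs : List (Fin n)) : FreeLieAlgebra ℤ (Fin n) :=
  xs.foldl (fun a j => ⁅a, FreeLieAlgebra.of ℤ j⁆) (FreeLieAlgebra.of ℤ x)

attribute [local instance 100] LieRing.ofAssociativeRing

/-- The embedding of the free Lie ring into the tensor (free) algebra. -/
noncomputable def embT (n : ℕ) : FreeLieAlgebra ℤ (Fin n) →ₗ[ℤ] FreeAlgebra ℤ (Fin n) :=
  (FreeLieAlgebra.lift ℤ (fun i : Fin n => FreeAlgebra.ι ℤ i)).toLinearMap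

/-- The word `x_{j₁} ⊗ ⋯ ⊗ x_{j_m}` in the tensor algebra. -/
def wordT {n : ℕ} (L : List (Fin n)) : FreeAlgebra ℤ (Fin n) :=
  (L.map (FreeAlgebra.ι ℤ)).prod

/-- Contraction of the first tensor factor against `x_i^*`. -/
noncomputable def contractT (n : ℕ) (i : Fin n) :
    FreeAlgebra ℤ (Fin n) →ₗ[ℤ] FreeAlgebra ℤ (Fin n) :=
  (FreeAlgebra.basisFreeMonoid ℤ (Fin n)).constr ℤ fun w =>
    match FreeMonoid.toList w with
    | [] => 0
    | j :: rest => if j = i then wordT rest else 0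

/-- Abelianization of the tensor algebra, `T(H) → ⊕ₖ Sᵏ H`. -/
noncomputable def abelT (n : ℕ) : FreeAlgebra ℤ (Fin n) →ₐ[ℤ] MvPolynomial (Fin n) ℤ :=
  FreeAlgebra.lift ℤ (fun i : Fin n => MvPolynomial.X i)

/-- The Morita trace component at index `p`. -/
noncomputable def MTc (n : ℕ) (p : Fin n) :
    FreeLieAlgebra ℤ (Fin n) →ₗ[ℤ] MvPolynomial (Fin n) ℤ :=
  (abelT n).toLinearMap ∘ₗ contractT n p ∘ₗ embT n

/-- The full Morita trace on `H^* ⊗ L_n(k+1) ≅ (Fin n → L_n)`. -/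
noncomputable def MTfull (n : ℕ) :
    (Fin n → FreeLieAlgebra ℤ (Fin n)) →ₗ[ℤ] MvPolynomial (Fin n) ℤ :=
  LinearMap.lsum ℤ (fun _ : Fin n => FreeLieAlgebra ℤ (Fin n)) ℤ (fun p => MTc n p)

/-
Contraction with `x_i^*` is a twisted derivation of the tensor algebra,
`Φ(xy) = Φ(x) y + ε(x) Φ(y)` with `ε` the augmentation, and `ε` kills the image of `ι`
(it is a Lie map to the abelian ring `ℤ` vanishing on generators). Hence
`Φ(ι[u, x_j]) = Φ(ι u · x_j - x_j · ι u) = Φ(ι u) x_j - δ_{i,j} ι u`, and the formula follows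
by induction on the length of the left-normed bracket.
-/

theorem List.sum_take_get_drop_concat {α β : Type*} [AddCommMonoid β]
    (f : List α → α → List α → β) (M : List α) (j : α) :
    ∑ t : Fin (M ++ [j]).length,
        f ((M ++ [j]).take t) ((M ++ [j]).get t) ((M ++ [j]).drop (t + 1)) =
      ∑ t : Fin M.length, f (M.take t) (M.get t) (M.drop (t + 1) ++ [j]) + f M j [] := by
  rw [← Fin.sum_congr' _ (by simp : (M ++ [j]).length = M.length + 1).symm, Fin.sum_univ_castSucc]
  congr 1
  · refine Finset.sum_congr rfl fun t _ => ?_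
    simp [List.getElem_append_left t.isLt, List.take_append_of_le_length t.isLt.le,
      List.drop_append_of_le_length t.isLt]
  · simp

section

variable {n : ℕ}

@[simp]
lemma wordT_nil : wordT ([] : List (Fin n)) = 1 := rfl

@[simp]
lemma wordT_cons (j : Fin n) (L : List (Fin n)) :
    wordT (j :: L) = FreeAlgebra.ι ℤ j * wordT L := List.prod_cons

lemma wordT_append (A B : List (Fin n)) : wordT (A ++ B) = wordT A * wordT B := by
  simp [wordT]

lemma basisFreeMonoid_eq_wordT (w : FreeMonoid (Fin n)) :
    FreeAlgebra.basisFreeMonoid ℤ (Fin n) w = wordT w.toList := by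
  simp only [FreeAlgebra.basisFreeMonoid, FreeAlgebra.equivMonoidAlgebraFreeMonoid,
    Module.Basis.map_apply, Finsupp.coe_basisSingleOne, LinearEquiv.trans_symm,
    LinearEquiv.trans_apply, MonoidAlgebra.coeffLinearEquiv_symm_apply,
    MonoidAlgebra.ofCoeff_single, AlgEquiv.coe_symm_toLinearEquiv, AlgEquiv.ofAlgHom_symm_apply,
    MonoidAlgebra.lift_single, wordT]
  erw [one_smul, FreeMonoid.lift_apply]

lemma contractT_wordT (i : Fin n) (L : List (Fin n)) :
    contractT n i (wordT L) =
      match L with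
      | [] => 0
      | j :: rest => if j = i then wordT rest else 0 := by
  rw [← FreeMonoid.toList_ofList L, ← basisFreeMonoid_eq_wordT, contractT]
  erw [Module.Basis.constr_basis]

lemma contractT_one (i : Fin n) : contractT n i 1 = 0 :=
  contractT_wordT i []

lemma contractT_ι_mul (i j : Fin n) (y : FreeAlgebra ℤ (Fin n)) :
    contractT n i (FreeAlgebra.ι ℤ j * y) = if j = i then y else 0 := by
  suffices h : contractT n i ∘ₗ LinearMap.mulLeft ℤ (FreeAlgebra.ι ℤ j) =
      (if j = i then 1 else 0 : ℤ) • LinearMap.id by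
    rw [← LinearMap.mulLeft_apply ℤ, ← LinearMap.comp_apply, h, LinearMap.smul_apply,
      ite_smul, one_smul, zero_smul, LinearMap.id_apply]
  refine (FreeAlgebra.basisFreeMonoid ℤ (Fin n)).ext fun w => ?_
  show contractT n i (FreeAlgebra.ι ℤ j * _) = (if j = i then 1 else 0 : ℤ) • _
  rw [ite_smul, one_smul, zero_smul, basisFreeMonoid_eq_wordT, ← wordT_cons, contractT_wordT]
  rfl

lemma contractT_ι (i j : Fin n) :
    contractT n i (FreeAlgebra.ι ℤ j) = if j = i then 1 else 0 := by
  simpa using contractT_ι_mul i j 1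

lemma contractT_mul (i : Fin n) (x y : FreeAlgebra ℤ (Fin n)) :
    contractT n i (x * y) =
      contractT n i x * y + FreeAlgebra.algebraMapInv x • contractT n i y := by
  induction x using FreeAlgebra.induction generalizing y with
  | grade0 r =>
    rw [Algebra.algebraMap_eq_smul_one, smul_mul_assoc, one_mul, map_smul, map_smul, contractT_one,
      smul_zero, zero_mul, zero_add, map_smul, map_one, smul_eq_mul, mul_one]
  | grade1 j =>
    rw [contractT_ι_mul, contractT_ι]
    split_ifs <;> simp [FreeAlgebra.algebraMapInv]
  | mul a b ha hb =>
    rw [mul_assoc, ha, hb, ha, map_mul, mul_smul, smul_add, add_mul, add_assoc, smul_mul_assoc,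
      mul_assoc]
  | add a b ha hb =>
    rw [add_mul, map_add, ha, hb, map_add, map_add, add_mul, add_smul]
    abel

lemma embT_of (j : Fin n) : embT n (FreeLieAlgebra.of ℤ j) = FreeAlgebra.ι ℤ j :=
  FreeLieAlgebra.lift_of_apply _ _

lemma embT_lie (a b : FreeLieAlgebra ℤ (Fin n)) :
    embT n ⁅a, b⁆ = embT n a * embT n b - embT n b * embT n a :=
  (LieHom.map_lie _ a b).trans (Ring.lie_def _ _)

lemma algebraMapInv_embT (a : FreeLieAlgebra ℤ (Fin n)) :
    FreeAlgebra.algebraMapInv (embT n a) = (0 : ℤ) := by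
  have h : FreeAlgebra.algebraMapInv.toLieHom.comp
      (FreeLieAlgebra.lift ℤ fun i : Fin n => FreeAlgebra.ι ℤ i) = 0 :=
    FreeLieAlgebra.hom_ext fun j => by
      -- `erw`: the Lie algebra structures `LieAlgebra.ofAssociativeAlgebra` (on the composite)
      -- and `LieRing.instLieAlgebra` (on `lift`) agree only up to unfolding.
      erw [LieHom.comp_apply, FreeLieAlgebra.lift_of_apply]
      simp [FreeAlgebra.algebraMapInv]
  exact LieHom.congr_fun h a

lemma lnb_concat (j₀ : Fin n) (L : List (Fin n)) (j : Fin n) :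
    lnb j₀ (L ++ [j]) = ⁅lnb j₀ L, FreeLieAlgebra.of ℤ j⁆ := by
  simp [lnb]

end

/-- Formula for the contraction `Φᵏ`: for a left-normed bracket `[x_{j₀}, L]`,
`Φᵏ(x_i^* ⊗ [x_{j₀},…]) = δ_{i,j₀} x_{i₂}⊗⋯ − Σₗ δ_{i,iₗ} ι([x_{j₀},…,x_{i_{l-1}}]) ⊗ x_{i_{l+1}}⊗⋯`,
where `ι` is the embedding of the free Lie ring into the tensor algebra. -/
theorem contraction_formula (n : ℕ) (i j₀ : Fin n) (L : List (Fin n)) :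
    contractT n i (embT n (lnb j₀ L)) =
      (if i = j₀ then wordT L else 0) -
        ∑ t : Fin L.length,
          if i = L.get t then embT n (lnb j₀ (L.take t)) * wordT (L.drop (t + 1)) else 0 := by
  induction L using List.reverseRecOn with
  | nil => simp [lnb, embT_of, contractT_ι, eq_comm]
  | append_singleton M j ih =>
    rw [List.sum_take_get_drop_concat (fun P a S =>
        if i = a then embT n (lnb j₀ P) * wordT S else 0),
      lnb_concat, embT_lie, embT_of, map_sub, contractT_mul, contractT_ι_mul, ih,
      algebraMapInv_embT, zero_smul, add_zero]
    simp only [wordT_append, wordT_cons, wordT_nil, mul_one, sub_mul, Finset.sum_mul, ite_mul,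
      zero_mul, mul_assoc, @eq_comm _ j i]
    abel
end
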